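/- Let (A, ≻, ≺) be a finite-dimensional anti-dendriform algebra and r ∈ A⊗A. The following are equivalent: (1) r + τ(r) is invariant; (2) L_·(x)T_{r+τ(r)}(ζ) = -T_{r+τ(r)}(R_≺*(x)ζ) and L_≻(x)T_{r+τ(r)}(ζ) = -T_{r+τ(r)}(R_·*(x)ζ) for all x ∈ A, ζ ∈ A*; (3) T_{r+τ(r)}(L_·*(x)ζ) = -R_≺(x)T_{r+τ(r)}(ζ) and T_{r+τ(r)}(L_≻*(x)ζ) = -R_·(x)T_{r+τ(r)}(ζ) for all x ∈ A, ζ ∈ A*. -/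

import Mathlib

/-!
Applying `t ↦ T_t` to `(f ⊗ I + I ⊗ g) t` gives `g T_t + T_t f*`, and `t ↦ T_t` is injective
when `A` is finite-dimensional (it is `A ⊗ A ≅ A** ⊗ A ≅ Hom(A*, A)`); this gives (1) ⇔ (2).
Transposing with the self-adjoint `T_{r+τ(r)}` turns (2) into (3).
-/

open TensorProduct

set_option synthInstance.maxHeartbeats 1000000
set_option maxHeartbeats 1600000

variable {K : Type*} [Field K]

/-- The anti-dendriform algebra identities for two bilinear operations `s` (≻) and `p` (≺):
`x≻(y≻z) = -(x·y)≻z = -x≺(y·z) = (x≺y)≺z` and `(x≻y)≺z = x≻(y≺z)`, where `x·y = x≻y + x≺y`. -/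
def IsAntiDend {M : Type*} [AddCommGroup M] [Module K M]
    (s p : M →ₗ[K] M →ₗ[K] M) : Prop :=
  ∀ x y z : M,
    s x (s y z) = - s (s x y + p x y) z ∧
    s x (s y z) = - p x (s y z + p y z) ∧
    s x (s y z) = p (p x y) z ∧
    p (s x y) z = s x (p y z)

/-- The bilinear map `a ⊗ b ↦ (ζ ↦ ζ(a) • b)` used to define `T_r`. -/
noncomputable def Tbil {M : Type*} [AddCommGroup M] [Module K M] :
    M →ₗ[K] M →ₗ[K] (Module.Dual K M →ₗ[K] M) :=
  LinearMap.mk₂ K (fun a b => (Module.Dual.eval K M a).smulRight b)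
    (fun a a' b => by ext ζ; simp [add_smul])
    (fun c a b => by
      ext ζ
      simp only [LinearMap.smulRight_apply, LinearMap.smul_apply, map_smul,
        Module.Dual.eval_apply, smul_eq_mul, mul_smul])
    (fun a b b' => by ext ζ; simp)
    (fun c a b => by
      ext ζ
      simp only [LinearMap.smulRight_apply, LinearMap.smul_apply]
      exact smul_comm _ _ _)

/-- `T_r : A* → A`, `⟨T_r ζ, η⟩ = ⟨r, ζ ⊗ η⟩`; concretely `T_r ζ = Σ ζ(aᵢ) • bᵢ`
for `r = Σ aᵢ ⊗ bᵢ`. -/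
noncomputable def TmL {M : Type*} [AddCommGroup M] [Module K M] (r : M ⊗[K] M) :
    Module.Dual K M →ₗ[K] M :=
  TensorProduct.lift Tbil r

/-- The flip `τ : A ⊗ A → A ⊗ A`. -/
noncomputable def tau {M : Type*} [AddCommGroup M] [Module K M] (r : M ⊗[K] M) : M ⊗[K] M :=
  TensorProduct.comm K M M r

/-- `r` is invariant: `(R_≺(x)⊗I + I⊗L_·(x)) r = 0` and `(R_·(x)⊗I + I⊗L_≻(x)) r = 0`. -/
def Invariant {M : Type*} [AddCommGroup M] [Module K M]
    (s p : M →ₗ[K] M →ₗ[K] M) (r : M ⊗[K] M) : Prop :=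
  ∀ x : M,
    TensorProduct.map (p.flip x) (LinearMap.id : M →ₗ[K] M) r
      + TensorProduct.map (LinearMap.id : M →ₗ[K] M) ((s + p) x) r = 0 ∧
    TensorProduct.map ((s + p).flip x) (LinearMap.id : M →ₗ[K] M) r
      + TensorProduct.map (LinearMap.id : M →ₗ[K] M) (s x) r = 0

variable {A : Type*} [AddCommGroup A] [Module K A]

section TmL

variable {M : Type*} [AddCommGroup M] [Module K M]

lemma TmL_add (u v : M ⊗[K] M) : TmL (u + v) = TmL u + TmL v :=
  map_add (TensorProduct.lift Tbil) u v

lemma TmL_tmul (a b : M) (ζ : Module.Dual K M) : TmL (a ⊗ₜ[K] b) ζ = ζ a • b := by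
  simp [TmL, Tbil]

lemma TmL_map_left (f : M →ₗ[K] M) (t : M ⊗[K] M) :
    TmL (TensorProduct.map f LinearMap.id t) = TmL t ∘ₗ f.dualMap := by
  induction t using TensorProduct.induction_on with
  | zero => simp [TmL]
  | tmul a b => ext ζ; simp [TmL_tmul]
  | add x y hx hy => rw [map_add, TmL_add, TmL_add, hx, hy, LinearMap.add_comp]

lemma TmL_map_right (g : M →ₗ[K] M) (t : M ⊗[K] M) :
    TmL (TensorProduct.map LinearMap.id g t) = g ∘ₗ TmL t := by
  induction t using TensorProduct.induction_on with
  | zero => simp [TmL]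
  | tmul a b => ext ζ; simp [TmL_tmul]
  | add x y hx hy => rw [map_add, TmL_add, TmL_add, hx, hy, LinearMap.comp_add]

lemma TmL_add_tau_apply_comm (t : M ⊗[K] M) (ζ η : Module.Dual K M) :
    η (TmL (t + tau t) ζ) = ζ (TmL (t + tau t) η) := by
  induction t using TensorProduct.induction_on with
  | zero => simp [tau, TmL]
  | tmul a b =>
      simp only [tau, TensorProduct.comm_tmul, TmL_add, LinearMap.add_apply, TmL_tmul,
        map_add, map_smul, smul_eq_mul]
      ring
  | add x y hx hy =>
      have hsplit : x + y + tau (x + y) = (x + tau x) + (y + tau y) := by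
        simp only [tau, map_add]; abel
      rw [hsplit, TmL_add, LinearMap.add_apply, LinearMap.add_apply, map_add, map_add, hx, hy]

lemma lift_Tbil_eq_dualTensorHom_comp :
    (TensorProduct.lift Tbil : M ⊗[K] M →ₗ[K] Module.Dual K M →ₗ[K] M) =
      dualTensorHom K (Module.Dual K M) M ∘ₗ
        TensorProduct.map (Module.Dual.eval K M) LinearMap.id := by
  ext a b ζ
  simp [Tbil]

lemma TmL_eq_zero_iff [FiniteDimensional K M] {t : M ⊗[K] M} : TmL t = 0 ↔ t = 0 := by
  have hinj : Function.Injective (TensorProduct.lift Tbil :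
      M ⊗[K] M →ₗ[K] Module.Dual K M →ₗ[K] M) := by
    rw [lift_Tbil_eq_dualTensorHom_comp, LinearMap.coe_comp]
    refine dualTensorHom_bijective.1.comp ?_
    exact (TensorProduct.congr (Module.evalEquiv K M) (LinearEquiv.refl K M)).injective
  exact injective_iff_map_eq_zero' _ |>.mp hinj t

end TmL

section SelfAdjoint

variable {M : Type*} [AddCommGroup M] [Module K M]

lemma map_left_add_map_right_eq_zero_iff [FiniteDimensional K M]
    (f g : M →ₗ[K] M) (t : M ⊗[K] M) :
    TensorProduct.map f LinearMap.id t + TensorProduct.map LinearMap.id g t = 0 ↔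
      ∀ ζ : Module.Dual K M, g (TmL t ζ) = - TmL t (f.dualMap ζ) := by
  simp only [← TmL_eq_zero_iff, TmL_add, TmL_map_left, TmL_map_right, LinearMap.ext_iff,
    LinearMap.add_apply, LinearMap.comp_apply, LinearMap.zero_apply, eq_neg_iff_add_eq_zero,
    add_comm]

variable {T : Module.Dual K M →ₗ[K] M} (hT : ∀ ζ η : Module.Dual K M, η (T ζ) = ζ (T η))
include hT

lemma apply_comp_add_comp_dualMap (f g : M →ₗ[K] M) (ζ η : Module.Dual K M) :
    η (g (T ζ) + T (f.dualMap ζ)) = ζ (T (g.dualMap η) + f (T η)) := by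
  rw [map_add, map_add, hT (f.dualMap ζ), ← hT ζ]
  rfl

-- For self-adjoint `T`, `g T = -T f*` is the transpose of `T g* = -f T`.
lemma comp_eq_neg_comp_dualMap_iff (f g : M →ₗ[K] M) :
    (∀ ζ, g (T ζ) = - T (f.dualMap ζ)) ↔ ∀ ζ, T (g.dualMap ζ) = - f (T ζ) := by
  simp only [eq_neg_iff_add_eq_zero]
  calc (∀ ζ, g (T ζ) + T (f.dualMap ζ) = 0)
      ↔ ∀ ζ η : Module.Dual K M, η (g (T ζ) + T (f.dualMap ζ)) = 0 :=
        forall_congr' fun ζ => (Module.forall_dual_apply_eq_zero_iff K _).symm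
    _ ↔ ∀ η ζ : Module.Dual K M, ζ (T (g.dualMap η) + f (T η)) = 0 := by
        simp only [apply_comp_add_comp_dualMap hT]
        exact forall_comm
    _ ↔ ∀ η, T (g.dualMap η) + f (T η) = 0 :=
        forall_congr' fun η => Module.forall_dual_apply_eq_zero_iff K _

end SelfAdjoint

theorem stmt5_general [FiniteDimensional K A]
    (s p : A →ₗ[K] A →ₗ[K] A) (r : A ⊗[K] A) :
    (Invariant s p (r + tau r) ↔
      ∀ (x : A) (ζ : Module.Dual K A),
        (s + p) x (TmL (r + tau r) ζ) = - TmL (r + tau r) ((p.flip x).dualMap ζ) ∧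
        s x (TmL (r + tau r) ζ) = - TmL (r + tau r) (((s + p).flip x).dualMap ζ)) ∧
    (Invariant s p (r + tau r) ↔
      ∀ (x : A) (ζ : Module.Dual K A),
        TmL (r + tau r) (((s + p) x).dualMap ζ) = - p.flip x (TmL (r + tau r) ζ) ∧
        TmL (r + tau r) ((s x).dualMap ζ) = - (s + p).flip x (TmL (r + tau r) ζ)) := by
  have invariant_iff : Invariant s p (r + tau r) ↔ ∀ (x : A) (ζ : Module.Dual K A),
      (s + p) x (TmL (r + tau r) ζ) = - TmL (r + tau r) ((p.flip x).dualMap ζ) ∧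
      s x (TmL (r + tau r) ζ) = - TmL (r + tau r) (((s + p).flip x).dualMap ζ) := by
    simp only [Invariant, map_left_add_map_right_eq_zero_iff, forall_and]
  refine ⟨invariant_iff, invariant_iff.trans ?_⟩
  simp only [forall_and, comp_eq_neg_comp_dualMap_iff (TmL_add_tau_apply_comm r)]

/-- for `s' = r + τ(r)`, the following are equivalent:
(1) `s'` is invariant; (2) `L_·(x)T_{s'}(ζ) = -T_{s'}(R_≺*(x)ζ)` and
`L_≻(x)T_{s'}(ζ) = -T_{s'}(R_·*(x)ζ)`; (3) `T_{s'}(L_·*(x)ζ) = -R_≺(x)T_{s'}(ζ)` and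
`T_{s'}(L_≻*(x)ζ) = -R_·(x)T_{s'}(ζ)`. -/
theorem stmt5 [FiniteDimensional K A]
    (s p : A →ₗ[K] A →ₗ[K] A) (h : IsAntiDend s p) (r : A ⊗[K] A) :
    (Invariant s p (r + tau r) ↔
      ∀ (x : A) (ζ : Module.Dual K A),
        (s + p) x (TmL (r + tau r) ζ) = - TmL (r + tau r) ((p.flip x).dualMap ζ) ∧
        s x (TmL (r + tau r) ζ) = - TmL (r + tau r) (((s + p).flip x).dualMap ζ)) ∧
    (Invariant s p (r + tau r) ↔
      ∀ (x : A) (ζ : Module.Dual K A),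
        TmL (r + tau r) (((s + p) x).dualMap ζ) = - p.flip x (TmL (r + tau r) ζ) ∧
        TmL (r + tau r) ((s x).dualMap ζ) = - (s + p).flip x (TmL (r + tau r) ζ)) :=
  stmt5_general s p r
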